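/- For a reaction network G, the following are equivalent: (1) G is not consistent; (2) there exists w in R^n with w · (y'-y) ≤ 0 for all edges, strict for at least one; (3) for all positive rate constants k there exists a linear function V(x) = w·x whose derivative along the mass-action vector field is strictly negative on the positive orthant; (4) for all positive rate constants k the mass-action system admits no positive equilibrium. -/

import Mathlib

open Real

/-- The mass-action vector field of a reaction network `E` with rate constants
`k`: `f_k(x) = ∑_{y→y'∈E} k_{y→y'} x^y (y' - y)` where `x^y = ∏ i, x i ^ y i`. -/
noncomputable def massActionField (n : ℕ)
    (E : Finset ((Fin n → ℝ) × (Fin n → ℝ)))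
    (k : (Fin n → ℝ) × (Fin n → ℝ) → ℝ) (x : Fin n → ℝ) : Fin n → ℝ :=
  ∑ e ∈ E, (k e * ∏ i, x i ^ e.1 i) • (e.2 - e.1)

/-!
By Stiemke's theorem, `G` is not consistent iff some `w` has `w · (y' - y) ≤ 0` on all edges
with one inequality strict. Such a `w` makes `w · x` strictly decreasing along the mass-action
flow for every choice of positive rates, which rules out positive equilibria; conversely, positive
weights `λ` witnessing consistency make `x = 1` an equilibrium of the system with rates `λ`.

Stiemke's theorem is proved variationally. If the subspace `W = {(w · (y' - y))_e}` meets the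
nonpositive orthant only in `0`, then `∑ exp z_e` grows at least linearly on `W`, so it has a
minimiser `z₀` on `W`, and the first-order condition says that `λ_e = exp z₀_e` is orthogonal
to `W`, i.e. `∑ λ_e (y' - y) = 0`.
-/

open Filter Metric Finset

theorem Finset.sum_mul_neg_of_pos_of_nonpos {α : Type*} {s : Finset α} {c f : α → ℝ}
    (hc : ∀ a ∈ s, 0 < c a) (hf : ∀ a ∈ s, f a ≤ 0) (hneg : ∃ a ∈ s, f a < 0) :
    ∑ a ∈ s, c a * f a < 0 := by
  obtain ⟨a, ha, hfa⟩ := hneg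
  exact sum_neg' (fun b hb => mul_nonpos_of_nonneg_of_nonpos (hc b hb).le (hf b hb))
    ⟨a, ha, mul_neg_of_pos_of_neg (hc a ha) hfa⟩

theorem exists_pos_mul_norm_le_of_homogeneous {E : Type*} [NormedAddCommGroup E]
    [NormedSpace ℝ E] [ProperSpace E] {f : E → ℝ} (hf : Continuous f)
    (hhom : ∀ t : ℝ, 0 ≤ t → ∀ x, f (t • x) = t * f x) (hpos : ∀ x ≠ 0, 0 < f x) :
    ∃ δ > 0, ∀ x, δ * ‖x‖ ≤ f x := by
  have hf0 : f 0 = 0 := by simpa using hhom 0 le_rfl 0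
  rcases subsingleton_or_nontrivial E with hE | hE
  · exact ⟨1, one_pos, fun x => by simp [Subsingleton.elim x 0, hf0]⟩
  obtain ⟨x₀, hx₀, hmin⟩ := (isCompact_sphere (0 : E) 1).exists_isMinOn
    (NormedSpace.sphere_nonempty.mpr zero_le_one) hf.continuousOn
  refine ⟨f x₀, hpos x₀ (ne_zero_of_mem_unit_sphere ⟨x₀, hx₀⟩), fun x => ?_⟩
  rcases eq_or_ne x 0 with rfl | hx
  · simp [hf0]
  have hnorm : 0 < ‖x‖ := norm_pos_iff.mpr hx
  have hunit : ‖x‖⁻¹ • x ∈ sphere (0 : E) 1 := by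
    simp [norm_smul, hnorm.ne']
  have := hmin hunit
  rw [Set.mem_ofPred_eq, hhom _ (inv_nonneg.mpr hnorm.le)] at this
  calc f x₀ * ‖x‖ ≤ ‖x‖⁻¹ * f x * ‖x‖ := by gcongr
    _ = f x := by field_simp

theorem exp_dotProduct_eq_zero_of_isMinOn {ι : Type*} [Fintype ι] {W : Submodule ℝ (ι → ℝ)}
    {z₀ : ι → ℝ} (hz₀ : z₀ ∈ W) (hmin : IsMinOn (fun z => ∑ i, exp (z i)) W z₀)
    {d : ι → ℝ} (hd : d ∈ W) : (fun i => exp (z₀ i)) ⬝ᵥ d = 0 := by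
  have hline : IsLocalMin (fun t : ℝ => ∑ i, exp (z₀ i + t * d i)) 0 :=
    Eventually.of_forall fun t => by
      simpa using hmin (W.add_mem hz₀ (W.smul_mem t hd))
  have hderiv : HasDerivAt (fun t : ℝ => ∑ i, exp (z₀ i + t * d i))
      ((fun i => exp (z₀ i)) ⬝ᵥ d) 0 := by
    refine HasDerivAt.fun_sum fun i _ => ?_
    simpa using ((hasDerivAt_mul_const (x := 0) (d i)).const_add (z₀ i)).exp
  exact hline.hasDerivAt_eq_zero hderiv

theorem Submodule.exists_pos_dotProduct_eq_zero {ι : Type*} [Fintype ι]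
    (W : Submodule ℝ (ι → ℝ)) (hW : ∀ z ∈ W, z ≤ 0 → z = 0) :
    ∃ c : ι → ℝ, (∀ i, 0 < c i) ∧ ∀ z ∈ W, c ⬝ᵥ z = 0 := by
  obtain ⟨δ, hδ, hgrowth⟩ := exists_pos_mul_norm_le_of_homogeneous
    (f := fun z : W => ∑ i, max (z.1 i) 0)
    (continuous_finsetSum _ fun i _ => ((continuous_apply i).comp continuous_subtype_val).max
      continuous_const)
    (fun t ht z => by simp [mul_sum, mul_max_of_nonneg _ _ ht])
    (fun z hz => by
      obtain ⟨i, hi⟩ : ∃ i, 0 < z.1 i := by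
        by_contra! h
        exact hz (Subtype.ext (hW z z.2 h))
      exact (lt_max_of_lt_left hi).trans_le
        (single_le_sum (fun j _ => le_max_right _ _) (mem_univ i)))
  have hcoercive : Tendsto (fun z : W => ∑ i, exp (z.1 i)) (cocompact W) atTop := by
    refine tendsto_atTop_mono (fun z => (hgrowth z).trans (sum_le_sum fun i _ => ?_))
      (tendsto_norm_cocompact_atTop.const_mul_atTop hδ)
    exact max_le (by linarith [add_one_le_exp (z.1 i)]) (exp_pos _).le
  have hcont : Continuous fun z : W => ∑ i, exp (z.1 i) :=
    continuous_finsetSum _ fun i _ =>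
      continuous_exp.comp ((continuous_apply i).comp continuous_subtype_val)
  obtain ⟨z₀, hz₀⟩ := hcont.exists_forall_le hcoercive
  exact ⟨fun i => exp (z₀.1 i), fun i => exp_pos _, fun d hd =>
    exp_dotProduct_eq_zero_of_isMinOn z₀.2 (fun z hz => hz₀ ⟨z, hz⟩) hd⟩

theorem exists_pos_sum_smul_eq_zero {ι m : Type*} [Fintype ι] [Fintype m] (v : ι → m → ℝ)
    (h : ∀ w : m → ℝ, (∀ i, w ⬝ᵥ v i ≤ 0) → ∀ i, w ⬝ᵥ v i = 0) :
    ∃ c : ι → ℝ, (∀ i, 0 < c i) ∧ ∑ i, c i • v i = 0 := by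
  obtain ⟨c, hc, horth⟩ :=
    (LinearMap.range (Matrix.of v).mulVecLin).exists_pos_dotProduct_eq_zero (by
      rintro _ ⟨w, rfl⟩ hw
      have := h w fun i => by simpa [Matrix.mulVec, dotProduct_comm] using hw i
      ext i
      simpa [Matrix.mulVec, dotProduct_comm] using this i)
  refine ⟨c, hc, dotProduct_self_eq_zero.mp ?_⟩
  have hvecMul : ∑ i, c i • v i = Matrix.vecMul c (Matrix.of v) := by
    ext j
    simp [Matrix.vecMul, dotProduct]
  rw [hvecMul, ← Matrix.dotProduct_mulVec]
  exact horth _ ⟨_, rfl⟩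

theorem stiemke {α m : Type*} [Fintype m] (s : Finset α) (v : α → m → ℝ) :
    (¬ ∃ c : α → ℝ, (∀ a ∈ s, 0 < c a) ∧ ∑ a ∈ s, c a • v a = 0) ↔
      ∃ w : m → ℝ, (∀ a ∈ s, w ⬝ᵥ v a ≤ 0) ∧ ∃ a ∈ s, w ⬝ᵥ v a < 0 := by
  classical
  constructor
  · intro hno
    by_contra! hw
    obtain ⟨c, hc, hsum⟩ := exists_pos_sum_smul_eq_zero (fun a : s => v a)
      fun w hle a => (hle a).antisymm (hw w (fun b hb => hle ⟨b, hb⟩) a a.2)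
    refine hno ⟨fun a => if ha : a ∈ s then c ⟨a, ha⟩ else 0,
      fun a ha => by simp [ha, hc], ?_⟩
    rw [← sum_coe_sort]
    simpa using hsum
  · rintro ⟨w, hle, hlt⟩ ⟨c, hc, hsum⟩
    have := congrArg (w ⬝ᵥ ·) hsum
    simp only [dotProduct_sum, dotProduct_smul, smul_eq_mul, dotProduct_zero] at this
    exact (sum_mul_neg_of_pos_of_nonpos hc hle hlt).ne this

section MassAction

variable {n : ℕ} {E : Finset ((Fin n → ℝ) × (Fin n → ℝ))}
  {k : (Fin n → ℝ) × (Fin n → ℝ) → ℝ}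

theorem dotProduct_massActionField (x w : Fin n → ℝ) :
    w ⬝ᵥ massActionField n E k x =
      ∑ e ∈ E, (k e * ∏ i, x i ^ e.1 i) * w ⬝ᵥ (e.2 - e.1) := by
  simp only [massActionField, dotProduct_sum, dotProduct_smul, smul_eq_mul]

theorem massActionField_one : massActionField n E k 1 = ∑ e ∈ E, k e • (e.2 - e.1) := by
  simp [massActionField]

end MassAction

theorem not_consistent_tfae_general (n : ℕ)
    (E : Finset ((Fin n → ℝ) × (Fin n → ℝ))) :
    [ (¬ ∃ lam : (Fin n → ℝ) × (Fin n → ℝ) → ℝ,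
          (∀ e ∈ E, 0 < lam e) ∧ ∑ e ∈ E, lam e • (e.2 - e.1) = 0),
      (∃ w : Fin n → ℝ,
          (∀ e ∈ E, ∑ j, w j * (e.2 j - e.1 j) ≤ 0) ∧
          ∃ e ∈ E, ∑ j, w j * (e.2 j - e.1 j) < 0),
      (∀ k : (Fin n → ℝ) × (Fin n → ℝ) → ℝ, (∀ e ∈ E, 0 < k e) →
          ∃ w : Fin n → ℝ, ∀ x : Fin n → ℝ, (∀ i, 0 < x i) →
            ∑ i, w i * massActionField n E k x i < 0),
      (∀ k : (Fin n → ℝ) × (Fin n → ℝ) → ℝ, (∀ e ∈ E, 0 < k e) →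
          ¬ ∃ x : Fin n → ℝ, (∀ i, 0 < x i) ∧ massActionField n E k x = 0)
    ].TFAE := by
  tfae_have 1 ↔ 2 := stiemke E fun e => e.2 - e.1
  tfae_have 2 → 3 := fun ⟨w, hle, hlt⟩ k hk => ⟨w, fun x hx => by
    refine (dotProduct_massActionField x w).trans_lt
      (sum_mul_neg_of_pos_of_nonpos (fun e he => ?_) hle hlt)
    exact mul_pos (hk e he) (prod_pos fun i _ => rpow_pos_of_pos (hx i) _)⟩
  tfae_have 3 → 4 := fun h3 k hk ⟨x, hx, hzero⟩ => by
    obtain ⟨w, hw⟩ := h3 k hk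
    simpa [hzero] using hw x hx
  tfae_have 4 → 1 := fun h4 ⟨lam, hpos, hsum⟩ =>
    h4 lam hpos ⟨1, fun _ => one_pos, massActionField_one.trans hsum⟩
  tfae_finish

/-- For a reaction network `G = (V, E)` (no self-loops), the following are
equivalent:
(1) `G` is not consistent;
(2) there exists `w ∈ ℝ^n` with `w · (y' - y) ≤ 0` for all edges, strict for at
    least one edge;
(3) for all positive rate constants `k` there is a linear function
    `V(x) = w · x` whose derivative along the mass-action vector field is
    strictly negative on the open positive orthant;
(4) for all positive rate constants `k` the mass-action system admits no
    positive equilibrium. -/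
theorem not_consistent_tfae (n : ℕ)
    (E : Finset ((Fin n → ℝ) × (Fin n → ℝ)))
    (hNoLoop : ∀ e ∈ E, e.1 ≠ e.2) :
    [ (¬ ∃ lam : (Fin n → ℝ) × (Fin n → ℝ) → ℝ,
          (∀ e ∈ E, 0 < lam e) ∧ ∑ e ∈ E, lam e • (e.2 - e.1) = 0),
      (∃ w : Fin n → ℝ,
          (∀ e ∈ E, ∑ j, w j * (e.2 j - e.1 j) ≤ 0) ∧
          ∃ e ∈ E, ∑ j, w j * (e.2 j - e.1 j) < 0),
      (∀ k : (Fin n → ℝ) × (Fin n → ℝ) → ℝ, (∀ e ∈ E, 0 < k e) →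
          ∃ w : Fin n → ℝ, ∀ x : Fin n → ℝ, (∀ i, 0 < x i) →
            ∑ i, w i * massActionField n E k x i < 0),
      (∀ k : (Fin n → ℝ) × (Fin n → ℝ) → ℝ, (∀ e ∈ E, 0 < k e) →
          ¬ ∃ x : Fin n → ℝ, (∀ i, 0 < x i) ∧ massActionField n E k x = 0)
    ].TFAE :=
  not_consistent_tfae_general n E
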